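/- arXiv:2106.15929 — 4 statements merged into one kernel-verified Lean document; each statement's English description precedes it below -/
import Mathlib

section
/- Let K₁, K₂ ⊆ ℝⁿ be closed convex cones such that K₁ ∩ K₂ is a linear subspace. Then the set K₁ − K₂ = {k₁ − k₂ : k₁ ∈ K₁, k₂ ∈ K₂} is closed. -/
/-!
Let `W = K₁ ∩ K₂`. Since `W` lies in both cones, moving the `W`-component of `k₁` over to `k₂`
gives `K₁ - K₂ = (K₁ ∩ Wᗮ) - K₂`, and the cones `K₁ ∩ Wᗮ` and `K₂` meet only at `0`. For closed
cones `C`, `D` with `C ∩ D = {0}`, compactness of the unit sphere gives `ε > 0` with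
`ε ‖c‖ ≤ ‖c - d‖`; so near any point, `C - D` is a compact set minus a closed set, hence closed.
-/

open Pointwise Set RealInnerProductSpace

namespace ConvexProcessPaper

/-- A convex cone: a nonempty convex set closed under nonnegative scalar multiplication. -/
def IsConvexCone {V : Type*} [AddCommMonoid V] [Module ℝ V] (S : Set V) : Prop :=
  S.Nonempty ∧ Convex ℝ S ∧ ∀ c : ℝ, 0 ≤ c → ∀ x ∈ S, c • x ∈ S

/-- A set is a linear subspace. -/
def IsLinearSubspace {V : Type*} [AddCommGroup V] [Module ℝ V] (S : Set V) : Prop :=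
  ∃ W : Submodule ℝ V, (W : Set V) = S

/-- Set-valued maps from ℝⁿ to ℝⁿ. -/
abbrev SVMap (n : ℕ) := EuclideanSpace ℝ (Fin n) → Set (EuclideanSpace ℝ (Fin n))

variable {n : ℕ}

/-- The graph of a set-valued map. -/
def graph (H : SVMap n) : Set (EuclideanSpace ℝ (Fin n) × EuclideanSpace ℝ (Fin n)) :=
  {p | p.2 ∈ H p.1}

/-- A convex process: a set-valued map whose graph is a convex cone. -/
def IsConvexProcess (H : SVMap n) : Prop := IsConvexCone (graph H)

/-- The domain of a set-valued map. -/
def dom (H : SVMap n) : Set (EuclideanSpace ℝ (Fin n)) := {x | (H x).Nonempty}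

/-- The image of a set-valued map. -/
def im (H : SVMap n) : Set (EuclideanSpace ℝ (Fin n)) := {y | ∃ x, y ∈ H x}

/-- The inverse of a set-valued map: gr(H⁻¹) = {(y,x) : (x,y) ∈ gr(H)}. -/
def invMap (H : SVMap n) : SVMap n := fun y => {x | y ∈ H x}

/-- The image of a set under a set-valued map: H(S) = ⋃_{x ∈ S} H(x). -/
def imSet (H : SVMap n) (S : Set (EuclideanSpace ℝ (Fin n))) :
    Set (EuclideanSpace ℝ (Fin n)) := ⋃ x ∈ S, H x

/-- The reachable set: R(H) = ⋃_{ℓ ≥ 0} H^ℓ({0}). -/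
def reach (H : SVMap n) : Set (EuclideanSpace ℝ (Fin n)) := ⋃ ℓ : ℕ, (imSet H)^[ℓ] {0}

/-- The null-controllable set: N(H) = R(H⁻¹). -/
def nullc (H : SVMap n) : Set (EuclideanSpace ℝ (Fin n)) := reach (invMap H)

/-- The feasible set: states from which an infinite trajectory emanates. -/
def feas (H : SVMap n) : Set (EuclideanSpace ℝ (Fin n)) :=
  {ξ | ∃ x : ℕ → EuclideanSpace ℝ (Fin n), x 0 = ξ ∧ ∀ k, x (k + 1) ∈ H (x k)}

/-- The minimal linear process L₋: gr(L₋) = lin(gr(H)) = gr(H) ∩ (−gr(H)). -/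
def Lminus (H : SVMap n) : SVMap n := fun x => {y | y ∈ H x ∧ -y ∈ H (-x)}

/-- The maximal linear process L₊: gr(L₊) = Lin(gr(H)) = gr(H) − gr(H). -/
def Lplus (H : SVMap n) : SVMap n :=
  fun x => {y | ∃ x₁ y₁ x₂ y₂, y₁ ∈ H x₁ ∧ y₂ ∈ H x₂ ∧ x = x₁ - x₂ ∧ y = y₁ - y₂}

/-- The negative dual process: p ∈ H⁻(q) ⇔ ⟨p,x⟩ ≥ ⟨q,y⟩ for all (x,y) ∈ gr(H). -/
def negDual (H : SVMap n) : SVMap n :=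
  fun q => {p | ∀ x y, y ∈ H x → ⟪q, y⟫ ≤ ⟪p, x⟫}

/-- The positive dual process: p ∈ H⁺(q) ⇔ ⟨p,x⟩ ≤ ⟨q,y⟩ for all (x,y) ∈ gr(H). -/
def posDual (H : SVMap n) : SVMap n :=
  fun q => {p | ∀ x y, y ∈ H x → ⟪p, x⟫ ≤ ⟪q, y⟫}

/-- The negative polar cone of a set. -/
def negPolar (C : Set (EuclideanSpace ℝ (Fin n))) : Set (EuclideanSpace ℝ (Fin n)) :=
  {y | ∀ x ∈ C, ⟪x, y⟫ ≤ 0}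

/-- The positive polar cone of a set. -/
def posPolar (C : Set (EuclideanSpace ℝ (Fin n))) : Set (EuclideanSpace ℝ (Fin n)) :=
  {y | ∀ x ∈ C, 0 ≤ ⟪x, y⟫}

/-- C is weakly H invariant: H(x) ∩ C ≠ ∅ for all x ∈ C. -/
def WeaklyInv (H : SVMap n) (C : Set (EuclideanSpace ℝ (Fin n))) : Prop :=
  ∀ x ∈ C, (H x ∩ C).Nonempty

/-- C is strongly H invariant: H(x) ⊆ C for all x ∈ C. -/
def StronglyInv (H : SVMap n) (C : Set (EuclideanSpace ℝ (Fin n))) : Prop :=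
  ∀ x ∈ C, H x ⊆ C

/-- H is reachable: every feasible state is reachable. -/
def IsReachable (H : SVMap n) : Prop := feas H ⊆ reach H

/-- H is null-controllable: every feasible state is null-controllable. -/
def IsNullControllable (H : SVMap n) : Prop := feas H ⊆ nullc H

theorem IsConvexCone.add_mem {V : Type*} [AddCommMonoid V] [Module ℝ V] {S : Set V}
    (h : IsConvexCone S) {x y : V} (hx : x ∈ S) (hy : y ∈ S) : x + y ∈ S := by
  have hmid : (2⁻¹ : ℝ) • x + (2⁻¹ : ℝ) • y ∈ S :=
    h.2.1 hx hy (by norm_num) (by norm_num) (by norm_num)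
  have h2 : (2 : ℝ) • ((2⁻¹ : ℝ) • x + (2⁻¹ : ℝ) • y) = x + y := by
    rw [smul_add, smul_smul, smul_smul]; norm_num
  simpa only [h2] using h.2.2 2 zero_le_two _ hmid

section ClosedCone

open Metric

variable {E : Type*} [NormedAddCommGroup E] [NormedSpace ℝ E] [ProperSpace E] {C D : Set E}

theorem exists_pos_mul_norm_le_norm_sub_of_inter_subset_zero (hC : IsClosed C) (hD : IsClosed D)
    (hDne : D.Nonempty) (hCsmul : ∀ t : ℝ, 0 ≤ t → ∀ x ∈ C, t • x ∈ C)
    (hDsmul : ∀ t : ℝ, 0 ≤ t → ∀ x ∈ D, t • x ∈ D) (hCD : C ∩ D ⊆ {0}) :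
    ∃ ε > 0, ∀ c ∈ C, ∀ d ∈ D, ε * ‖c‖ ≤ ‖c - d‖ := by
  have hpos : ∀ u ∈ C ∩ sphere (0 : E) 1, 0 < infDist u D := by
    rintro u ⟨huC, hu⟩
    refine (hD.notMem_iff_infDist_pos hDne).1 fun huD => ?_
    have hu0 : u = 0 := hCD ⟨huC, huD⟩
    simp [hu0] at hu
  obtain ⟨ε, hε, hmin⟩ := ((isCompact_sphere (0 : E) 1).inter_left hC).exists_forall_le'
    (continuous_infDist_pt D).continuousOn hpos
  refine ⟨ε, hε, fun c hc d hd => ?_⟩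
  rcases eq_or_ne c 0 with rfl | hc0
  · simp
  have hn : 0 < ‖c‖ := norm_pos_iff.2 hc0
  have hunit : ‖c‖⁻¹ • c ∈ C ∩ sphere (0 : E) 1 :=
    ⟨hCsmul _ (inv_nonneg.2 hn.le) c hc, by simp [norm_smul, hn.ne']⟩
  calc ε * ‖c‖ ≤ infDist (‖c‖⁻¹ • c) D * ‖c‖ := by gcongr; exact hmin _ hunit
    _ ≤ ‖‖c‖⁻¹ • c - ‖c‖⁻¹ • d‖ * ‖c‖ := by
      gcongr
      rw [← dist_eq_norm]
      exact infDist_le_dist_of_mem (hDsmul _ (inv_nonneg.2 hn.le) d hd)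
    _ = ‖c - d‖ := by
      rw [← smul_sub, norm_smul, norm_inv, norm_norm, mul_comm, mul_inv_cancel_left₀ hn.ne']

theorem isClosed_sub_of_inter_subset_zero (hC : IsClosed C) (hD : IsClosed D)
    (hDne : D.Nonempty) (hCsmul : ∀ t : ℝ, 0 ≤ t → ∀ x ∈ C, t • x ∈ C)
    (hDsmul : ∀ t : ℝ, 0 ≤ t → ∀ x ∈ D, t • x ∈ D) (hCD : C ∩ D ⊆ {0}) :
    IsClosed (C - D) := by
  obtain ⟨ε, hε, hsep⟩ :=
    exists_pos_mul_norm_le_norm_sub_of_inter_subset_zero hC hD hDne hCsmul hDsmul hCD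
  refine isClosed_of_closure_subset fun z hz => ?_
  set r := ‖z‖ + 1
  -- Near `z`, only the compact part `‖c‖ ≤ r / ε` of `C` contributes to `C - D`.
  have hlocal : ball 0 r ∩ (C - D) ⊆ (C ∩ closedBall 0 (r / ε)) - D := by
    rintro _ ⟨hcd, c, hc, d, hd, rfl⟩
    refine ⟨c, ⟨hc, ?_⟩, d, hd, rfl⟩
    rw [mem_ball_zero_iff] at hcd
    rw [mem_closedBall_zero_iff, le_div_iff₀ hε]
    linarith [hsep c hc d hd]
  have hclosed : IsClosed ((C ∩ closedBall 0 (r / ε)) - D) := by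
    rw [sub_eq_add_neg]
    exact hD.neg.add_left_of_isCompact ((isCompact_closedBall 0 _).inter_left hC)
  have hz' : z ∈ closure (ball 0 r ∩ (C - D)) :=
    isOpen_ball.inter_closure ⟨by simp [r], hz⟩
  exact sub_subset_sub_right inter_subset_left (hclosed.closure_subset_iff.2 hlocal hz')

end ClosedCone

theorem IsConvexCone.sub_eq_inter_orthogonal_sub {E : Type*} [NormedAddCommGroup E]
    [InnerProductSpace ℝ E] {K₁ K₂ : Set E} (h₁ : IsConvexCone K₁) (h₂ : IsConvexCone K₂)
    (W : Submodule ℝ E) [W.HasOrthogonalProjection] (hW : (W : Set E) ⊆ K₁ ∩ K₂) :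
    K₁ - K₂ = (K₁ ∩ Wᗮ) - K₂ := by
  refine (sub_subset_sub_right inter_subset_left).antisymm' ?_
  rintro _ ⟨a, ha, b, hb, rfl⟩
  have hp : -W.starProjection a ∈ K₁ ∩ K₂ := hW (W.neg_mem (W.starProjection_apply_mem a))
  refine ⟨a - W.starProjection a, ⟨?_, W.sub_starProjection_mem_orthogonal a⟩,
    b - W.starProjection a, ?_, sub_sub_sub_cancel_right _ _ _⟩
  · simpa only [sub_eq_add_neg] using h₁.add_mem ha hp.1
  · simpa only [sub_eq_add_neg] using h₂.add_mem hb hp.2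

/-- if K₁ ∩ K₂ is a subspace then K₁ − K₂ is closed. -/
theorem sub_of_closed_cones_closed {n : ℕ} (K₁ K₂ : Set (EuclideanSpace ℝ (Fin n)))
    (h₁ : IsConvexCone K₁) (h₂ : IsConvexCone K₂)
    (hc₁ : IsClosed K₁) (hc₂ : IsClosed K₂)
    (hsub : IsLinearSubspace (K₁ ∩ K₂)) :
    IsClosed (K₁ - K₂) := by
  obtain ⟨W, hW⟩ := hsub
  rw [h₁.sub_eq_inter_orthogonal_sub h₂ W hW.subset]
  refine isClosed_sub_of_inter_subset_zero (hc₁.inter W.isClosed_orthogonal) hc₂ h₂.1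
    (fun t ht x hx => ⟨h₁.2.2 t ht x hx.1, Wᗮ.smul_mem t hx.2⟩) h₂.2.2 ?_
  rintro x ⟨⟨hx₁, hxW⟩, hx₂⟩
  exact W.disjoint_def.1 W.orthogonal_disjoint x (hW.symm.subset ⟨hx₁, hx₂⟩) hxW

end ConvexProcessPaper
end

section
/- Let H : ℝⁿ ⇉ ℝⁿ be a convex process and K ⊆ ℝⁿ a convex cone such that K − dom(H) is a linear subspace. If K is strongly H invariant, then the negative polar cone K⁻ is weakly H⁻ invariant. -/
/-! Fix `q ∈ K⁻` and consider the convex cone `C = {(k - x, -⟪q, y⟫) : y ∈ H x, k ∈ K}` in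
`ℝⁿ × ℝ`. Its projection to `ℝⁿ` is the subspace `K - dom H`, and strong invariance gives
`t ≥ 0` whenever `(0, t) ∈ C` (then `x = k ∈ K`, so `y ∈ K` and `⟪q, y⟫ ≤ 0`). The M. Riesz
extension theorem therefore produces a linear `φ` with `φ w ≤ t` on `C`. Its Riesz representative
`p` satisfies `⟪p, k - x⟫ ≤ -⟪q, y⟫`: with `k = 0` this says `p ∈ H⁻(q)`, with `x = y = 0` it
says `p ∈ K⁻`. -/

open Pointwise Set RealInnerProductSpace

theorem PointedCone.exists_linearMap_le_of_image_fst_eq {E : Type*} [AddCommGroup E] [Module ℝ E]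
    (C : PointedCone ℝ (E × ℝ)) (W : Submodule ℝ E)
    (hfst : Prod.fst '' (C : Set (E × ℝ)) = W) (hC : ∀ t, ((0 : E), t) ∈ C → 0 ≤ t) :
    ∃ φ : E →ₗ[ℝ] ℝ, ∀ z ∈ C, φ z.1 ≤ z.2 := by
  obtain ⟨V, hWV⟩ := W.exists_isCompl
  -- Extend `(v, t) ↦ t` from `V × ℝ`: as `W ⊔ V = ⊤`, each `(e, t)` shifts into `C` along `V × ℝ`.
  let f : E × ℝ →ₗ.[ℝ] ℝ := ⟨V.prod ⊤, LinearMap.snd ℝ E ℝ ∘ₗ (V.prod ⊤).subtype⟩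
  have nonneg : ∀ x : f.domain, (x : E × ℝ) ∈ C → 0 ≤ f x := by
    rintro ⟨⟨v, t⟩, hv, -⟩ (hvt : (v, t) ∈ C)
    have hvW : v ∈ W := by rw [← SetLike.mem_coe, ← hfst]; exact ⟨_, hvt, rfl⟩
    obtain rfl : v = 0 := Submodule.disjoint_def.mp hWV.disjoint v hvW hv
    exact hC t hvt
  have dense : ∀ y, ∃ x : f.domain, (x : E × ℝ) + y ∈ C := by
    rintro ⟨e, t⟩
    obtain ⟨w, hw, v, hv, rfl⟩ : ∃ w ∈ W, ∃ v ∈ V, w + v = e :=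
      Submodule.mem_sup.mp (hWV.sup_eq_top ▸ Submodule.mem_top)
    obtain ⟨⟨w, r⟩, hwr, rfl⟩ : w ∈ Prod.fst '' (C : Set (E × ℝ)) := hfst ▸ hw
    refine ⟨⟨(-v, r - t), V.neg_mem hv, trivial⟩, ?_⟩
    convert hwr using 1
    simp
  obtain ⟨g, hgf, hgC⟩ := riesz_extension C f nonneg dense
  refine ⟨-(g ∘ₗ LinearMap.inl ℝ E ℝ), fun z hz => ?_⟩
  have hsplit : g z = g (z.1, 0) + z.2 := by
    have hsnd : g (0, z.2) = z.2 := hgf ⟨(0, z.2), V.zero_mem, trivial⟩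
    rw [← hsnd, ← map_add, Prod.mk_add_mk, add_zero, zero_add]
  have := hgC z hz
  simp only [LinearMap.neg_apply, LinearMap.comp_apply, LinearMap.inl_apply]
  linarith

namespace ConvexProcessPaper

section Cone

variable {V : Type*} [AddCommMonoid V] [Module ℝ V] {S : Set V}

lemma IsConvexCone.zero_mem (hS : IsConvexCone S) : (0 : V) ∈ S := by
  obtain ⟨⟨x, hx⟩, -, hsmul⟩ := hS
  simpa using hsmul 0 le_rfl x hx

lemma IsConvexCone.add_mem_s11 (hS : IsConvexCone S) {a b : V} (ha : a ∈ S) (hb : b ∈ S) :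
    a + b ∈ S := by
  have hmid := hS.2.1 ha hb (by norm_num : (0 : ℝ) ≤ 1 / 2) (by norm_num : (0 : ℝ) ≤ 1 / 2)
    (by norm_num)
  convert hS.2.2 2 zero_le_two _ hmid using 1
  rw [smul_add, smul_smul, smul_smul]
  norm_num

def IsConvexCone.toPointedCone (hS : IsConvexCone S) : PointedCone ℝ V where
  carrier := S
  zero_mem' := hS.zero_mem
  add_mem' := hS.add_mem_s11
  smul_mem' c _ hx := hS.2.2 c c.2 _ hx

end Cone

variable {n : ℕ} {H : SVMap n} {K : Set (EuclideanSpace ℝ (Fin n))}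

noncomputable def invarianceMap (q : EuclideanSpace ℝ (Fin n)) :
    (EuclideanSpace ℝ (Fin n) × EuclideanSpace ℝ (Fin n)) × EuclideanSpace ℝ (Fin n) →ₗ[ℝ]
      EuclideanSpace ℝ (Fin n) × ℝ where
  toFun z := (z.2 - z.1.1, -⟪q, z.1.2⟫)
  map_add' z z' := by ext <;> simp [inner_add_right] <;> abel
  map_smul' c z := by ext <;> simp [inner_smul_right, smul_sub]

noncomputable def invarianceCone (hH : IsConvexProcess H) (hK : IsConvexCone K)
    (q : EuclideanSpace ℝ (Fin n)) :
    PointedCone ℝ (EuclideanSpace ℝ (Fin n) × ℝ) :=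
  PointedCone.map (invarianceMap q)
    ((IsConvexCone.toPointedCone (S := graph H) hH).prod hK.toPointedCone)

variable {hH : IsConvexProcess H} {hK : IsConvexCone K} {q : EuclideanSpace ℝ (Fin n)}

lemma mem_invarianceCone {z : EuclideanSpace ℝ (Fin n) × ℝ} :
    z ∈ invarianceCone hH hK q ↔
      ∃ x y k, y ∈ H x ∧ k ∈ K ∧ (k - x, -⟪q, y⟫) = z := by
  simp only [invarianceCone, PointedCone.mem_map, Prod.exists, Submodule.mem_prod, and_assoc]
  rfl

lemma image_fst_invarianceCone :
    Prod.fst '' (invarianceCone hH hK q : Set (EuclideanSpace ℝ (Fin n) × ℝ)) = K - dom H := by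
  ext w
  simp only [Set.mem_image, SetLike.mem_coe, mem_invarianceCone, Set.mem_sub]
  constructor
  · rintro ⟨_, ⟨x, y, k, hy, hk, rfl⟩, rfl⟩
    exact ⟨k, hk, x, ⟨y, hy⟩, rfl⟩
  · rintro ⟨k, hk, x, ⟨y, hy⟩, rfl⟩
    exact ⟨_, ⟨x, y, k, hy, hk, rfl⟩, rfl⟩

lemma nonneg_of_zero_mem_invarianceCone (hstrong : StronglyInv H K) (hq : q ∈ negPolar K)
    {t : ℝ} (ht : (0, t) ∈ invarianceCone hH hK q) : 0 ≤ t := by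
  obtain ⟨x, y, k, hy, hk, hz⟩ := mem_invarianceCone.mp ht
  obtain ⟨hkx, rfl⟩ := Prod.mk.inj hz
  obtain rfl : k = x := sub_eq_zero.mp hkx
  have := hq y (hstrong k hk hy)
  rw [real_inner_comm] at this
  linarith

variable (hH hK) in
lemma mem_negDual_inter_negPolar {p : EuclideanSpace ℝ (Fin n)}
    (hp : ∀ z ∈ invarianceCone hH hK q, ⟪p, z.1⟫ ≤ z.2) : p ∈ negDual H q ∩ negPolar K := by
  have hH0 : (0 : EuclideanSpace ℝ (Fin n)) ∈ H 0 := IsConvexCone.zero_mem (S := graph H) hH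
  refine ⟨fun x y hy => ?_, fun k hk => ?_⟩
  · have := hp _ (mem_invarianceCone.mpr ⟨x, y, 0, hy, hK.zero_mem, rfl⟩)
    simp only [zero_sub, inner_neg_right] at this
    linarith
  · have := hp _ (mem_invarianceCone.mpr ⟨0, 0, k, hH0, hk, rfl⟩)
    simpa [real_inner_comm] using this

/-- strong invariance of K implies weak H⁻ invariance of K⁻. -/
theorem strongInv_to_weakInv_dual {n : ℕ} (H : SVMap n) (hH : IsConvexProcess H)
    (K : Set (EuclideanSpace ℝ (Fin n))) (hK : IsConvexCone K)
    (hsub : IsLinearSubspace (K - dom H))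
    (hstrong : StronglyInv H K) :
    WeaklyInv (negDual H) (negPolar K) := by
  intro q hq
  obtain ⟨W, hW⟩ := hsub
  obtain ⟨φ, hφ⟩ := (invarianceCone hH hK q).exists_linearMap_le_of_image_fst_eq W
    (image_fst_invarianceCone.trans hW.symm) fun _ => nonneg_of_zero_mem_invarianceCone hstrong hq
  let p := (InnerProductSpace.toDual ℝ _).symm (LinearMap.toContinuousLinearMap φ)
  refine ⟨p, mem_negDual_inter_negPolar hH hK fun z hz => ?_⟩
  rw [InnerProductSpace.toDual_symm_apply]
  exact hφ z hz

end ConvexProcessPaper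
end

section
/- Let H : ℝⁿ ⇉ ℝⁿ be a convex process such that dom(H) + R₋ = ℝⁿ, where R₋ is the reachable set of the minimal linear process L₋ associated with H. Then H is reachable if and only if R(H) = ℝⁿ. -/
open Pointwise Set RealInnerProductSpace

namespace ConvexProcessPaper

variable {n : ℕ}

/-!
Since `dom H + R₋ = ℝⁿ`, from any `ξ` there is a pseudo-trajectory `x_{k+1} ∈ H (x_k + r_k)`
with corrections `r_k ∈ R₋`. As `gr L₋` is a linear subspace of a finite-dimensional space,
`R₋ = L₋^N(0)` for one `N`, so every `r_m` is the end of an `L₋`-chain of length `N` that can be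
started at time `m - N`. Superposing these chains gives `c` with `c_{k+1} ∈ L₋ (c_k - r_k)` and
`c_0 ∈ R₋`. Then `x + c` is a genuine trajectory of `H`, so `ξ + c_0` is feasible, hence reachable
when `H` is, and `ξ = (ξ + c_0) - c_0 ∈ R(H) + R₋ ⊆ R(H)`.
-/

/-- `b m` is a chain `0 = b m N ↦ ⋯ ↦ b m 0` of `G` run so that it delivers `b m 0` at time `m`;
the sum at time `t` is over the chains still running. -/
theorem sum_delayed_chains_mem {E : Type*} [AddCommGroup E] (G : AddSubmonoid (E × E)) {N : ℕ}
    (b : ℕ → ℕ → E) (hb : ∀ m, ∀ k < N, (b m (k + 1), b m k) ∈ G) (hbN : ∀ m, b m N = 0)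
    (t : ℕ) :
    (∑ k ∈ Finset.range N, b (t + k) k - b t 0, ∑ k ∈ Finset.range N, b (t + 1 + k) k) ∈ G := by
  have hfst : ∑ k ∈ Finset.range N, b (t + k) k - b t 0 =
      ∑ k ∈ Finset.range N, b (t + 1 + k) (k + 1) := by
    have h := (Finset.sum_range_succ' (fun k => b (t + k) k) N).symm.trans
      (Finset.sum_range_succ _ N)
    simp only [hbN, add_zero] at h
    rw [← h, add_sub_cancel_right]
    exact Finset.sum_congr rfl fun k _ => by rw [add_right_comm, add_assoc]
  rw [hfst, prod_mk_sum]
  exact G.sum_mem fun k hk => hb _ k (Finset.mem_range.1 hk)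

def relImage {R E : Type*} [Semiring R] [AddCommMonoid E] [Module R E] (G : Submodule R (E × E))
    (S : Submodule R E) : Submodule R E :=
  (G ⊓ S.prod ⊤).map (LinearMap.snd R E E)

theorem mem_relImage {R E : Type*} [Semiring R] [AddCommMonoid E] [Module R E]
    {G : Submodule R (E × E)} {S : Submodule R E} {y : E} :
    y ∈ relImage G S ↔ ∃ x ∈ S, (x, y) ∈ G := by
  simp [relImage, Submodule.mem_map, Submodule.mem_prod, and_comm]

theorem IsLinearSubspace.isConvexCone {V : Type*} [AddCommGroup V] [Module ℝ V] {S : Set V}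
    (hS : IsLinearSubspace S) : IsConvexCone S := by
  obtain ⟨W, rfl⟩ := hS
  exact ⟨⟨0, W.zero_mem⟩, W.convex, fun c _ x hx => W.smul_mem c hx⟩

section Iterates

variable {F G : SVMap n}

@[simp]
theorem mem_imSet {S : Set (EuclideanSpace ℝ (Fin n))} {y : EuclideanSpace ℝ (Fin n)} :
    y ∈ imSet F S ↔ ∃ x ∈ S, y ∈ F x := by
  simp [imSet]

theorem monotone_imSet : Monotone (imSet F) :=
  fun _ _ h => biUnion_subset_biUnion_left h

theorem monotone_iterate_imSet_zero (h0 : (0 : EuclideanSpace ℝ (Fin n)) ∈ F 0) :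
    Monotone fun ℓ => (imSet F)^[ℓ] {0} := by
  refine monotone_nat_of_le_succ fun ℓ => ?_
  rw [Function.iterate_succ_apply]
  exact monotone_imSet.iterate ℓ (singleton_subset_iff.2 (mem_imSet.2 ⟨0, rfl, h0⟩))

theorem exists_chain_of_mem_iterate {N : ℕ} {y : EuclideanSpace ℝ (Fin n)}
    (hy : y ∈ (imSet F)^[N] {0}) :
    ∃ b : ℕ → EuclideanSpace ℝ (Fin n), b 0 = y ∧ b N = 0 ∧ ∀ k < N, b k ∈ F (b (k + 1)) := by
  induction N generalizing y with
  | zero => exact ⟨fun _ => 0, (mem_singleton_iff.1 hy).symm, rfl, by simp⟩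
  | succ N ih =>
    rw [Function.iterate_succ_apply', mem_imSet] at hy
    obtain ⟨x, hx, hyx⟩ := hy
    obtain ⟨b, rfl, hbN, hb⟩ := ih hx
    refine ⟨fun k => Nat.casesOn k y b, rfl, hbN, fun k hk => ?_⟩
    cases k with
    | zero => exact hyx
    | succ k => exact hb k (by omega)

theorem mem_iterate_of_chain {N : ℕ} {b : ℕ → EuclideanSpace ℝ (Fin n)} (hbN : b N = 0)
    (hb : ∀ k < N, b k ∈ F (b (k + 1))) {k : ℕ} (hk : k ≤ N) :
    b k ∈ (imSet F)^[N - k] {0} := by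
  induction hk using Nat.decreasingInduction with
  | self => simp [hbN]
  | of_succ k hk ih =>
    rw [show N - k = N - (k + 1) + 1 by omega, Function.iterate_succ_apply']
    exact mem_imSet.2 ⟨_, ih, hb k hk⟩

theorem reach_mono (h : ∀ x, F x ⊆ G x) : reach F ⊆ reach G := by
  have key : ∀ ℓ, (imSet F)^[ℓ] {0} ⊆ (imSet G)^[ℓ] {0} := by
    intro ℓ
    induction ℓ with
    | zero => exact subset_rfl
    | succ ℓ ih =>
      rw [Function.iterate_succ_apply', Function.iterate_succ_apply']
      exact (biUnion_mono subset_rfl fun x _ => h x).trans (monotone_imSet ih)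
  exact iUnion_mono key

end Iterates

section ConvexProcess

variable {H : SVMap n}

theorem IsConvexProcess.zero_mem (hH : IsConvexProcess H) :
    (0 : EuclideanSpace ℝ (Fin n)) ∈ H 0 := by
  obtain ⟨⟨p, hp⟩, -, hcone⟩ := hH
  have h0 := hcone 0 le_rfl p hp
  rwa [zero_smul] at h0

theorem IsConvexProcess.add_mem (hH : IsConvexProcess H) {x y u v : EuclideanSpace ℝ (Fin n)}
    (hy : y ∈ H x) (hv : v ∈ H u) : y + v ∈ H (x + u) := by
  obtain ⟨-, hconv, hcone⟩ := hH
  have hmid := hconv (x := (x, y)) (y := (u, v)) hy hv (a := 1 / 2) (b := 1 / 2)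
    (by norm_num) (by norm_num) (by norm_num)
  have h2 := hcone 2 (by norm_num) _ hmid
  rwa [smul_add, smul_smul, smul_smul, show (2 : ℝ) * (1 / 2) = 1 by norm_num, one_smul,
    one_smul] at h2

theorem IsConvexProcess.smul_mem (hH : IsConvexProcess H) {x y : EuclideanSpace ℝ (Fin n)}
    {c : ℝ} (hc : 0 ≤ c) (hy : y ∈ H x) : c • y ∈ H (c • x) :=
  hH.2.2 c hc (x, y) hy

theorem IsConvexProcess.add_mem_iterate (hH : IsConvexProcess H) (ℓ : ℕ)
    {x y : EuclideanSpace ℝ (Fin n)} (hx : x ∈ (imSet H)^[ℓ] {0})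
    (hy : y ∈ (imSet H)^[ℓ] {0}) : x + y ∈ (imSet H)^[ℓ] {0} := by
  induction ℓ generalizing x y with
  | zero => simp_all
  | succ ℓ ih =>
    simp only [Function.iterate_succ_apply', mem_imSet] at hx hy ⊢
    obtain ⟨x', hx', hxx⟩ := hx
    obtain ⟨y', hy', hyy⟩ := hy
    exact ⟨x' + y', ih hx' hy', hH.add_mem hxx hyy⟩

theorem IsConvexProcess.add_mem_reach (hH : IsConvexProcess H) {x y : EuclideanSpace ℝ (Fin n)}
    (hx : x ∈ reach H) (hy : y ∈ reach H) : x + y ∈ reach H := by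
  obtain ⟨i, hi⟩ := mem_iUnion.1 hx
  obtain ⟨j, hj⟩ := mem_iUnion.1 hy
  have hmono := monotone_iterate_imSet_zero hH.zero_mem
  exact mem_iUnion.2 ⟨max i j, hH.add_mem_iterate _ (hmono (le_max_left i j) hi)
    (hmono (le_max_right i j) hj)⟩

theorem neg_mem_Lminus {x y : EuclideanSpace ℝ (Fin n)} (hy : y ∈ Lminus H x) :
    -y ∈ Lminus H (-x) :=
  ⟨hy.2, by simpa using hy.1⟩

theorem neg_mem_reach_Lminus {x : EuclideanSpace ℝ (Fin n)} (hx : x ∈ reach (Lminus H)) :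
    -x ∈ reach (Lminus H) := by
  obtain ⟨ℓ, hℓ⟩ := mem_iUnion.1 hx
  refine mem_iUnion.2 ⟨ℓ, ?_⟩
  induction ℓ generalizing x with
  | zero => simp_all
  | succ ℓ ih =>
    rw [Function.iterate_succ_apply', mem_imSet] at hℓ ⊢
    obtain ⟨x', hx', hxx⟩ := hℓ
    exact ⟨-x', ih (mem_iUnion.2 ⟨ℓ, hx'⟩) hx', neg_mem_Lminus hxx⟩

theorem IsConvexProcess.add_mem_Lminus (hH : IsConvexProcess H)
    {x y u v : EuclideanSpace ℝ (Fin n)} (hy : y ∈ Lminus H x) (hv : v ∈ Lminus H u) :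
    y + v ∈ Lminus H (x + u) :=
  ⟨hH.add_mem hy.1 hv.1, by rw [neg_add, neg_add]; exact hH.add_mem hy.2 hv.2⟩

theorem IsConvexProcess.smul_mem_Lminus (hH : IsConvexProcess H) {x y : EuclideanSpace ℝ (Fin n)}
    (c : ℝ) (hy : y ∈ Lminus H x) : c • y ∈ Lminus H (c • x) := by
  have nonneg : ∀ {c : ℝ} {x y}, 0 ≤ c → y ∈ Lminus H x → c • y ∈ Lminus H (c • x) :=
    fun hc hy => ⟨hH.smul_mem hc hy.1, by simpa using hH.smul_mem hc hy.2⟩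
  rcases le_total 0 c with hc | hc
  · exact nonneg hc hy
  · simpa using nonneg (neg_nonneg.2 hc) (neg_mem_Lminus hy)

theorem IsConvexProcess.isLinearSubspace_graph_Lminus (hH : IsConvexProcess H) :
    IsLinearSubspace (graph (Lminus H)) :=
  ⟨{ carrier := graph (Lminus H)
     add_mem' := fun ha hb => hH.add_mem_Lminus ha hb
     zero_mem' := ⟨hH.zero_mem, by simpa using hH.zero_mem⟩
     smul_mem' := fun c _ hp => hH.smul_mem_Lminus c hp }, rfl⟩

theorem IsConvexProcess.lminus (hH : IsConvexProcess H) : IsConvexProcess (Lminus H) :=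
  hH.isLinearSubspace_graph_Lminus.isConvexCone

end ConvexProcess

theorem reach_eq_iterate_of_isLinearSubspace {F : SVMap n} (hF : IsLinearSubspace (graph F)) :
    ∃ N, reach F = (imSet F)^[N] {0} := by
  obtain ⟨G, hG⟩ := hF
  have hmem : ∀ x y, (x, y) ∈ G ↔ y ∈ F x := fun x y => Set.ext_iff.1 hG (x, y)
  have hsemiconj : Function.Semiconj SetLike.coe (relImage G) (imSet F) := fun S => by
    ext y
    simp only [SetLike.mem_coe, mem_relImage, mem_imSet, hmem]
  set V : ℕ → Submodule ℝ (EuclideanSpace ℝ (Fin n)) := fun ℓ => (relImage G)^[ℓ] ⊥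
  have hV : ∀ ℓ, (V ℓ : Set (EuclideanSpace ℝ (Fin n))) = (imSet F)^[ℓ] {0} := fun ℓ => by
    simpa using hsemiconj.iterate_right ℓ ⊥
  have h0 : (0 : EuclideanSpace ℝ (Fin n)) ∈ F 0 := (hmem 0 0).1 G.zero_mem
  have hmono : Monotone V := fun i j hij => by
    rw [← SetLike.coe_subset_coe, hV, hV]
    exact monotone_iterate_imSet_zero h0 hij
  obtain ⟨N, hN⟩ := WellFoundedGT.monotone_chain_condition ⟨V, hmono⟩
  refine ⟨N, subset_antisymm (iUnion_subset fun ℓ => ?_)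
    (subset_iUnion (fun ℓ => (imSet F)^[ℓ] {0}) N)⟩
  rw [← hV, ← hV, SetLike.coe_subset_coe]
  rcases le_total ℓ N with h | h
  · exact hmono h
  · exact (hN ℓ h).ge

theorem IsConvexProcess.exists_correction {H : SVMap n} (hH : IsConvexProcess H)
    {r : ℕ → EuclideanSpace ℝ (Fin n)} (hr : ∀ m, r m ∈ reach (Lminus H)) :
    ∃ c : ℕ → EuclideanSpace ℝ (Fin n),
      c 0 ∈ reach (Lminus H) ∧ ∀ t, c (t + 1) ∈ Lminus H (c t - r t) := by
  obtain ⟨W, hW⟩ := hH.isLinearSubspace_graph_Lminus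
  have hmemW : ∀ x y, (x, y) ∈ W ↔ y ∈ Lminus H x := fun x y => Set.ext_iff.1 hW (x, y)
  obtain ⟨N, hN⟩ := reach_eq_iterate_of_isLinearSubspace ⟨W, hW⟩
  choose b hb0 hbN hb using fun m => exists_chain_of_mem_iterate (hN ▸ hr m)
  refine ⟨fun t => ∑ k ∈ Finset.range N, b (t + k) k, ?_, fun t => ?_⟩
  · refine Finset.sum_induction _ (· ∈ reach (Lminus H)) (fun _ _ => hH.lminus.add_mem_reach)
      (mem_iUnion.2 ⟨0, rfl⟩) fun k hk =>
        mem_iUnion.2 ⟨_, mem_iterate_of_chain (hbN _) (hb _) (Finset.mem_range.1 hk).le⟩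
  · have h := sum_delayed_chains_mem W.toAddSubmonoid b
      (fun m k hk => (hmemW _ _).2 (hb m k hk)) hbN t
    rw [hb0] at h
    exact (hmemW _ _).1 h

theorem exists_pseudo_trajectory {H : SVMap n} {S : Set (EuclideanSpace ℝ (Fin n))}
    (hdom : dom H + S = univ) (hS : ∀ s ∈ S, -s ∈ S) (ξ : EuclideanSpace ℝ (Fin n)) :
    ∃ x r : ℕ → EuclideanSpace ℝ (Fin n),
      x 0 = ξ ∧ (∀ k, r k ∈ S) ∧ ∀ k, x (k + 1) ∈ H (x k + r k) := by
  have hstep : ∀ v, ∃ r ∈ S, (H (v + r)).Nonempty := fun v => by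
    obtain ⟨d, hd, s, hs, rfl⟩ := hdom.symm ▸ mem_univ v
    exact ⟨-s, hS s hs, by rw [add_neg_cancel_right]; exact hd⟩
  choose r hrS y hy using hstep
  refine ⟨fun k => y^[k] ξ, fun k => r (y^[k] ξ), rfl, fun k => hrS _, fun k => ?_⟩
  simpa only [Function.iterate_succ_apply'] using hy _

/-- H is reachable iff R(H) = ℝⁿ. -/
theorem reachable_iff_reach_univ {n : ℕ} (H : SVMap n) (hH : IsConvexProcess H)
    (hdom : dom H + reach (Lminus H) = Set.univ) :
    IsReachable H ↔ reach H = Set.univ := by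
  refine ⟨fun hreach => eq_univ_of_forall fun ξ => ?_, fun h => (subset_univ _).trans h.superset⟩
  obtain ⟨x, r, rfl, hr, hx⟩ :=
    exists_pseudo_trajectory hdom (fun _ => neg_mem_reach_Lminus) ξ
  obtain ⟨c, hc0, hc⟩ := hH.exists_correction hr
  have hfeas : x 0 + c 0 ∈ feas H :=
    ⟨fun t => x t + c t, rfl, fun t => by simpa using hH.add_mem (hx t) (hc t).1⟩
  have hneg : -c 0 ∈ reach H := reach_mono (fun _ _ hy => hy.1) (neg_mem_reach_Lminus hc0)
  simpa using hH.add_mem_reach (hreach hfeas) hneg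

end ConvexProcessPaper
end

section
/- Let H : ℝⁿ ⇉ ℝⁿ be a convex process. If ξ is an eigenvector of the negative dual process H⁻ corresponding to a nonnegative eigenvalue, i.e. λξ ∈ H⁻(ξ) for some λ ≥ 0 and ξ ≠ 0, then ξ ∈ (R(H))⁻. -/
open Pointwise Set RealInnerProductSpace

namespace ConvexProcessPaper

variable {n : ℕ}

theorem imSet_subset_iff {H : SVMap n} {S T : Set (EuclideanSpace ℝ (Fin n))} :
    imSet H S ⊆ T ↔ ∀ x ∈ S, H x ⊆ T :=
  iUnion₂_subset_iff

theorem reach_subset_of_imSet_subset {H : SVMap n} {S : Set (EuclideanSpace ℝ (Fin n))}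
    (h0 : (0 : EuclideanSpace ℝ (Fin n)) ∈ S) (hS : imSet H S ⊆ S) : reach H ⊆ S := by
  refine iUnion_subset fun ℓ => ?_
  induction ℓ with
  | zero => simpa using h0
  | succ ℓ ih =>
    rw [Function.iterate_succ_apply']
    exact (biUnion_subset_biUnion_left ih).trans hS

theorem mem_negPolar_singleton {ξ y : EuclideanSpace ℝ (Fin n)} :
    y ∈ negPolar {ξ} ↔ ⟪ξ, y⟫ ≤ 0 := by
  simp [negPolar]

theorem mem_negPolar_iff_subset_negPolar_singleton {ξ : EuclideanSpace ℝ (Fin n)}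
    {C : Set (EuclideanSpace ℝ (Fin n))} : ξ ∈ negPolar C ↔ C ⊆ negPolar {ξ} := by
  simp only [negPolar, subset_def, mem_ofPred_eq, mem_singleton_iff, forall_eq,
    real_inner_comm ξ]

theorem imSet_negPolar_singleton_subset {H : SVMap n} {ξ : EuclideanSpace ℝ (Fin n)} {lam : ℝ}
    (hlam : 0 ≤ lam) (heig : lam • ξ ∈ negDual H ξ) :
    imSet H (negPolar {ξ}) ⊆ negPolar {ξ} := by
  refine imSet_subset_iff.2 fun x hx y hy => mem_negPolar_singleton.2 ?_
  calc ⟪ξ, y⟫ ≤ ⟪lam • ξ, x⟫ := heig x y hy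
    _ = lam * ⟪ξ, x⟫ := real_inner_smul_left ξ x lam
    _ ≤ 0 := mul_nonpos_of_nonneg_of_nonpos hlam (mem_negPolar_singleton.1 hx)

theorem eigvec_negDual_mem_reach_polar_general {n : ℕ} (H : SVMap n)
    (ξ : EuclideanSpace ℝ (Fin n)) (lam : ℝ) (hlam : 0 ≤ lam)
    (heig : lam • ξ ∈ negDual H ξ) :
    ξ ∈ negPolar (reach H) :=
  mem_negPolar_iff_subset_negPolar_singleton.2 <|
    reach_subset_of_imSet_subset (by simp [mem_negPolar_singleton])
      (imSet_negPolar_singleton_subset hlam heig)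

/-- eigenvectors of H⁻ with nonnegative eigenvalue lie in (R(H))⁻. -/
theorem eigvec_negDual_mem_reach_polar {n : ℕ} (H : SVMap n) (hH : IsConvexProcess H)
    (ξ : EuclideanSpace ℝ (Fin n)) (lam : ℝ) (hlam : 0 ≤ lam) (hξ : ξ ≠ 0)
    (heig : lam • ξ ∈ negDual H ξ) :
    ξ ∈ negPolar (reach H) :=
  eigvec_negDual_mem_reach_polar_general H ξ lam hlam heig

end ConvexProcessPaper
end
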